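/- arXiv:1805.08651 — 3 statements merged into one kernel-verified Lean document; each statement's English description precedes it below -/
import Mathlib

section
/- Let v: ℝⁿ → ℝⁿ be a C¹ diffeomorphism such that for every y ∈ ℝⁿ and every pair j ≠ j′, the product of partial derivatives ∂vᵢ/∂yⱼ(y) · ∂vᵢ/∂y_{j′}(y) = 0 for all i. Then each row of the Jacobian of v has at most one nonzero entry at each point; moreover, by invertibility and continuity of the Jacobian, there exists a permutation π of {1,…,n} such that each vᵢ depends only on y_{π(i)}, and each map y_{π(i)} ↦ vᵢ is an invertible scalar function. -/
/-!
The Jacobian of `v` is invertible at every point, its inverse being the Jacobian of `w`. So every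
row has exactly one nonzero entry, and distinct rows have it in distinct columns. For a fixed row,
the sets where a given column is nonzero are open by continuity, pairwise disjoint, and cover
`ℝⁿ`, so by connectedness one of them is all of `ℝⁿ`: the column does not depend on the point.
Then `vᵢ` has zero derivative in every direction that keeps `y_{π(i)}` fixed, so it is a function
of `y_{π(i)}` alone, and bijectivity of `v` forces this function to be bijective.
-/

open Function Set

namespace Matrix

variable {m n K : Type*} [Fintype n]

theorem mulVec_apply_eq_of_forall_ne_eq_zero [NonUnitalNonAssocSemiring K] {A : Matrix m n K}
    {i : m} {j : n} (h : ∀ j', j' ≠ j → A i j' = 0) (x : n → K) :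
    (A *ᵥ x) i = A i j * x j :=
  Finset.sum_eq_single j (fun j' _ hj' => by simp [h j' hj']) (by simp)

theorem exists_ne_zero_of_surjective_mulVec [Semiring K] [Nontrivial K] {A : Matrix m n K}
    (hA : Surjective A.mulVec) (i : m) : ∃ j, A i j ≠ 0 := by
  classical
  obtain ⟨x, hx⟩ := hA (Pi.single i 1)
  by_contra! h
  have : (A *ᵥ x) i = 0 := Finset.sum_eq_zero fun j _ => by simp [h j]
  simp [hx] at this

theorem eq_of_ne_zero_of_surjective_mulVec [Semiring K] [NoZeroDivisors K] [Nontrivial K]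
    {A : Matrix m n K} (hA : Surjective A.mulVec)
    (hrow : ∀ i j j', j ≠ j' → A i j * A i j' = 0) {i i' : m} {j : n}
    (hi : A i j ≠ 0) (hi' : A i' j ≠ 0) : i = i' := by
  classical
  by_contra hne
  have hsingle : ∀ k, A k j ≠ 0 → ∀ j', j' ≠ j → A k j' = 0 := fun k hk j' hj' =>
    (mul_eq_zero.1 (hrow k j j' hj'.symm)).resolve_left hk
  obtain ⟨x, hx⟩ := hA (Pi.single i 1)
  have h1 : A i j * x j = 1 := by
    rw [← mulVec_apply_eq_of_forall_ne_eq_zero (hsingle i hi), hx, Pi.single_eq_same]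
  have h0 : A i' j * x j = 0 := by
    rw [← mulVec_apply_eq_of_forall_ne_eq_zero (hsingle i' hi'), hx, Pi.single_eq_of_ne' hne]
  rw [(mul_eq_zero.1 h0).resolve_left hi', mul_zero] at h1
  exact zero_ne_one h1

end Matrix

theorem exists_eq_univ_of_isOpen_of_pairwise_disjoint {X ι : Type*} [TopologicalSpace X]
    [ConnectedSpace X] {U : ι → Set X} (hU : ∀ j, IsOpen (U j))
    (hdisj : Pairwise (Disjoint on U)) (hcover : ⋃ j, U j = univ) : ∃ j, U j = univ := by
  obtain ⟨j, hj⟩ := mem_iUnion.1 (hcover ▸ mem_univ (Classical.arbitrary X))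
  have hcompl : (U j)ᶜ = ⋃ k ≠ j, U k := by
    ext x
    obtain ⟨k, hk⟩ := mem_iUnion.1 (hcover ▸ mem_univ x)
    simp only [mem_compl_iff, mem_iUnion]
    exact ⟨fun hx => ⟨k, fun h => hx (h ▸ hk), hk⟩,
      fun ⟨k, hkj, hx⟩ => disjoint_left.1 (hdisj hkj) hx⟩
  refine ⟨j, IsClopen.eq_univ ⟨?_, hU j⟩ ⟨_, hj⟩⟩
  rw [← isOpen_compl_iff, hcompl]
  exact isOpen_biUnion fun k _ => hU k

theorem Matrix.exists_perm_forall_ne_eq_zero_of_continuous {X ι K : Type*} [TopologicalSpace X]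
    [ConnectedSpace X] [Fintype ι] [Semiring K] [NoZeroDivisors K] [Nontrivial K]
    [TopologicalSpace K] [T1Space K] {J : X → Matrix ι ι K} (hJ : Continuous J)
    (hsurj : ∀ x, Surjective (J x).mulVec) (hrow : ∀ x i j j', j ≠ j' → J x i j * J x i j' = 0) :
    ∃ π : Equiv.Perm ι, ∀ x i j, j ≠ π i → J x i j = 0 := by
  have hcol : ∀ i, ∃ j, ∀ x, J x i j ≠ 0 := fun i => by
    obtain ⟨j, hj⟩ := exists_eq_univ_of_isOpen_of_pairwise_disjoint
      (U := fun j => {x | J x i j ≠ 0})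
      (fun j => isOpen_compl_singleton.preimage (hJ.matrix_elem i j))
      (fun j j' hjj' => disjoint_left.2 fun x hx hx' => mul_ne_zero hx hx' (hrow x i j j' hjj'))
      (eq_univ_of_forall fun x => mem_iUnion.2 (exists_ne_zero_of_surjective_mulVec (hsurj x) i))
    exact ⟨j, fun x => (eq_univ_iff_forall.1 hj x :)⟩
  choose σ hσ using hcol
  obtain ⟨x₀⟩ := ‹ConnectedSpace X›.toNonempty
  have hσinj : Injective σ := fun i i' h =>
    eq_of_ne_zero_of_surjective_mulVec (hsurj x₀) (hrow x₀) (hσ i x₀) (h ▸ hσ i' x₀)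
  exact ⟨Equiv.ofBijective σ hσinj.bijective_of_finite, fun x i j hj =>
    (mul_eq_zero.1 (hrow x i j (σ i) hj)).resolve_right (hσ i x)⟩

section Calculus

variable {𝕜 ι κ E F : Type*} [Fintype ι] [DecidableEq ι]

theorem HasFDerivAt.hasDerivAt_comp_update [NontriviallyNormedField 𝕜] [NormedAddCommGroup F]
    [NormedSpace 𝕜 F] {f : (ι → 𝕜) → F} {f' : (ι → 𝕜) →L[𝕜] F} {y : ι → 𝕜}
    (hf : HasFDerivAt f f' y) (j : ι) :
    HasDerivAt (fun t => f (update y j t)) (f' (Pi.single j 1)) (y j) :=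
  hf.comp_hasDerivAt_of_eq (y j) (hasDerivAt_update y j (y j)) (update_eq_self j y).symm

theorem deriv_update_apply_eq_toMatrix'_fderiv [NontriviallyNormedField 𝕜] [Fintype κ]
    {v : (ι → 𝕜) → κ → 𝕜} {y : ι → 𝕜} (hv : DifferentiableAt 𝕜 v y) (i : κ) (j : ι) :
    deriv (fun t => v (update y j t) i) (y j) =
      LinearMap.toMatrix' (fderiv 𝕜 v y : (ι → 𝕜) →ₗ[𝕜] κ → 𝕜) i j :=
  (hasDerivAt_pi.1 (hv.hasFDerivAt.hasDerivAt_comp_update j) i).deriv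

theorem ContDiff.continuous_toMatrix'_fderiv [NontriviallyNormedField 𝕜] [Fintype κ] {v : (ι → 𝕜) → κ → 𝕜}
    (hv : ContDiff 𝕜 1 v) :
    Continuous fun y => LinearMap.toMatrix' (fderiv 𝕜 v y : (ι → 𝕜) →ₗ[𝕜] κ → 𝕜) :=
  continuous_pi fun i => continuous_pi fun _ =>
    (continuous_apply i).comp ((hv.continuous_fderiv one_ne_zero).clm_apply continuous_const)

theorem surjective_fderiv_of_rightInverse [NontriviallyNormedField 𝕜] [NormedAddCommGroup E]
    [NormedSpace 𝕜 E] [NormedAddCommGroup F] [NormedSpace 𝕜 F] {f : E → F} {g : F → E}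
    (hfg : RightInverse g f) {z : F} (hf : DifferentiableAt 𝕜 f (g z))
    (hg : DifferentiableAt 𝕜 g z) : Surjective (fderiv 𝕜 f (g z)) := fun u =>
  ⟨fderiv 𝕜 g z u, by
    have hcomp := fderiv_comp z hf hg
    rw [hfg.comp_eq_id, fderiv_id] at hcomp
    exact (congrArg (· u) hcomp).symm⟩

theorem add_eq_of_hasFDerivAt_apply_eq_zero [RCLike 𝕜] [NormedAddCommGroup E] [NormedSpace 𝕜 E]
    [NormedAddCommGroup F] [NormedSpace 𝕜 F] {f : E → F} {f' : E → E →L[𝕜] F}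
    (hf : ∀ y, HasFDerivAt f (f' y) y) {d : E} (hd : ∀ y, f' y d = 0) (y : E) :
    f (y + d) = f y := by
  have hline : ∀ t : 𝕜, HasDerivAt (fun s : 𝕜 => f (y + s • d)) 0 t := fun t => by
    have := (hf (y + t • d)).comp_hasDerivAt t (((hasDerivAt_id t).smul_const d).const_add y)
    rwa [one_smul, hd] at this
  simpa using is_const_of_deriv_eq_zero (fun t => (hline t).differentiableAt)
    (fun t => (hline t).deriv) 1 0

theorem apply_eq_apply_of_toMatrix'_fderiv_eq_zero [RCLike 𝕜] {v : (ι → 𝕜) → κ → 𝕜}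
    (hv : Differentiable 𝕜 v) {i : κ} {k : ι}
    (h : ∀ y j, j ≠ k → LinearMap.toMatrix' (fderiv 𝕜 v y : (ι → 𝕜) →ₗ[𝕜] κ → 𝕜) i j = 0)
    {y y' : ι → 𝕜} (hyy' : y k = y' k) : v y i = v y' i := by
  have := add_eq_of_hasFDerivAt_apply_eq_zero (fun z => hasFDerivAt_pi'.1 (hv z).hasFDerivAt i)
    (d := y' - y) (fun z => by
      rw [ContinuousLinearMap.comp_apply, ContinuousLinearMap.proj_apply, ← ContinuousLinearMap.coe_coe,
        ← LinearMap.toMatrix'_mulVec, Matrix.mulVec_apply_eq_of_forall_ne_eq_zero (h z),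
        Pi.sub_apply, hyy', sub_self, mul_zero]) y
  simpa using this.symm

end Calculus

theorem bijective_update_apply_of_bijective {ι κ α β : Type*} [DecidableEq ι]
    {v : (ι → α) → κ → β} (hv : Bijective v) {σ : κ → ι} (hσ : Injective σ)
    (hdep : ∀ i y y', y (σ i) = y' (σ i) → v y i = v y' i) (a : ι → α) (i : κ) :
    Bijective fun t => v (update a (σ i) t) i := by
  refine ⟨fun s t hst => ?_, fun c => ?_⟩
  · have : v (update a (σ i) s) = v (update a (σ i) t) := funext fun k => by
      by_cases hk : k = i
      · exact hk ▸ hst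
      · exact hdep k _ _ (by simp [hσ.ne hk])
    simpa using congrFun (hv.1 this) (σ i)
  · obtain ⟨y, hy⟩ := hv.2 fun _ => c
    exact ⟨y (σ i), (hdep i _ _ (by simp)).trans (congrFun hy i)⟩

/-- If `v : ℝⁿ → ℝⁿ` is a C¹ diffeomorphism whose partial derivatives satisfy
`∂vᵢ/∂yⱼ · ∂vᵢ/∂y_{j'} = 0` for all `j ≠ j'` and every point, then there is a
permutation `π` such that `∂vᵢ/∂yⱼ ≡ 0` whenever `j ≠ π(i)`, and each `vᵢ`
depends only on `y_{π(i)}` through an invertible scalar function. -/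
theorem stmt7
    {n : ℕ}
    (v w : (Fin n → ℝ) → (Fin n → ℝ))
    (hv : ContDiff ℝ 1 v) (hw : ContDiff ℝ 1 w)
    (hlinv : Function.LeftInverse w v) (hrinv : Function.RightInverse w v)
    (pd : Fin n → Fin n → (Fin n → ℝ) → ℝ)
    (hpd : ∀ i j y, pd i j y = deriv (fun t => v (Function.update y j t) i) (y j))
    (hprod : ∀ (y : Fin n → ℝ) (i j j' : Fin n), j ≠ j' →
        pd i j y * pd i j' y = 0) :
    (∀ (y : Fin n → ℝ) (i : Fin n), ∃ j : Fin n,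
        ∀ j' : Fin n, j' ≠ j → pd i j' y = 0) ∧
    ∃ π : Equiv.Perm (Fin n),
      (∀ (i j : Fin n) (y : Fin n → ℝ), j ≠ π i → pd i j y = 0) ∧
      (∀ i : Fin n, ∃ φ : ℝ → ℝ, Function.Bijective φ ∧
          ∀ y : Fin n → ℝ, v y i = φ (y (π i))) := by
  have hvd : Differentiable ℝ v := hv.differentiable one_ne_zero
  have hjac : ∀ y, Matrix.of (fun i j => pd i j y) =
      LinearMap.toMatrix' (fderiv ℝ v y : (Fin n → ℝ) →ₗ[ℝ] Fin n → ℝ) := fun y => by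
    ext i j
    rw [Matrix.of_apply, hpd, deriv_update_apply_eq_toMatrix'_fderiv (hvd y)]
  have hsurj : ∀ y, Surjective (fderiv ℝ v y) := fun y => by
    simpa only [hlinv y] using
      surjective_fderiv_of_rightInverse hrinv (hvd _) ((hw.differentiable one_ne_zero) (v y))
  obtain ⟨π, hπ⟩ := Matrix.exists_perm_forall_ne_eq_zero_of_continuous
    (J := fun y => Matrix.of fun i j => pd i j y)
    (by simpa only [hjac] using hv.continuous_toMatrix'_fderiv)
    (fun y => by
      rw [hjac, funext (LinearMap.toMatrix'_mulVec _), ContinuousLinearMap.coe_coe]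
      exact hsurj y) hprod
  have hdep : ∀ i y y', y (π i) = y' (π i) → v y i = v y' i := fun i _ _ =>
    apply_eq_apply_of_toMatrix'_fderiv_eq_zero hvd fun z j hj => by
      rw [← hjac]; exact hπ z i j hj
  exact ⟨fun y i => ⟨π i, fun j hj => hπ y i j hj⟩, π, fun i j y hj => hπ y i j hj, fun i =>
    ⟨_, bijective_update_apply_of_bijective ⟨hlinv.injective, hrinv.surjective⟩ π.injective
      hdep 0 i, fun y => hdep i _ _ (by simp)⟩⟩
end

section
/- Let v: ℝⁿ → ℝⁿ be a C¹ diffeomorphism whose Jacobian matrix at every point has at most one nonzero entry in each row. If ℝⁿ is connected, then the positions of the nonzero entries are the same at all points: there is a single permutation π such that ∂vᵢ/∂yⱼ ≡ 0 whenever j ≠ π(i). -/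
open Function

/-! Since `v` has a differentiable left inverse, its Jacobian is invertible at every point `y`.
A row with at most one nonzero entry then has exactly one, in a column `σ y i`, and `σ y` is
injective. The entries are continuous, so a nonzero entry stays nonzero nearby, which pins the
column there: `σ` is locally constant, hence constant on the connected space `ℝⁿ`. -/

namespace LinearMap

variable {R ι κ : Type*} [Semiring R] [Fintype κ] [DecidableEq κ] {L : (κ → R) →ₗ[R] ι → R}

theorem apply_eq_mul_of_row_support {i : ι} {k : κ}
    (hrow : ∀ j, j ≠ k → L (Pi.single j 1) i = 0) (x : κ → R) :
    L x i = x k * L (Pi.single k 1) i := by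
  have hsingle : ∀ j, L (Pi.single j (x j)) i = x j * L (Pi.single j 1) i := fun j => by
    rw [← smul_eq_mul, ← Pi.smul_apply, ← map_smul, ← Pi.single_smul', smul_eq_mul, mul_one]
  conv_lhs => rw [← Finset.univ_sum_single x]
  simp only [map_sum, Finset.sum_apply, hsingle]
  exact Finset.sum_eq_single k (fun j _ hj => by rw [hrow j hj, mul_zero]) (by simp)

variable [DecidableEq ι]

theorem apply_single_ne_zero_of_row_support [Nontrivial R] (hL : Surjective L) {i : ι} {k : κ}
    (hrow : ∀ j, j ≠ k → L (Pi.single j 1) i = 0) : L (Pi.single k 1) i ≠ 0 := by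
  obtain ⟨x, hx⟩ := hL (Pi.single i 1)
  have h := apply_eq_mul_of_row_support hrow x
  rw [hx, Pi.single_eq_same] at h
  exact right_ne_zero_of_mul (h ▸ one_ne_zero)

theorem injective_of_row_support [Nontrivial R] [NoZeroDivisors R] (hL : Surjective L)
    {σ : ι → κ} (hrow : ∀ i j, j ≠ σ i → L (Pi.single j 1) i = 0) : Injective σ := by
  intro i₁ i₂ hσ
  by_contra hne
  obtain ⟨x, hx⟩ := hL (Pi.single i₁ 1)
  have h₁ := apply_eq_mul_of_row_support (hrow i₁) x
  have h₂ := apply_eq_mul_of_row_support (hrow i₂) x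
  rw [hx, Pi.single_eq_same] at h₁
  rw [hx, Pi.single_eq_of_ne (Ne.symm hne), ← hσ] at h₂
  have hx₁ : x (σ i₁) ≠ 0 := left_ne_zero_of_mul (h₁ ▸ one_ne_zero)
  have ha₂ := apply_single_ne_zero_of_row_support hL (hrow i₂)
  rw [← hσ] at ha₂
  exact mul_ne_zero hx₁ ha₂ h₂.symm

end LinearMap

theorem fderiv_surjective_of_leftInverse {𝕜 E : Type*} [NontriviallyNormedField 𝕜]
    [NormedAddCommGroup E] [NormedSpace 𝕜 E] [FiniteDimensional 𝕜 E] {v w : E → E}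
    (hwv : LeftInverse w v) {y : E} (hv : DifferentiableAt 𝕜 v y)
    (hw : DifferentiableAt 𝕜 w (v y)) : Surjective (fderiv 𝕜 v y) := by
  have hcomp : (fderiv 𝕜 w (v y)).comp (fderiv 𝕜 v y) = ContinuousLinearMap.id 𝕜 E := by
    have h := hw.hasFDerivAt.comp y hv.hasFDerivAt
    rw [hwv.comp_eq_id] at h
    exact h.unique (hasFDerivAt_id y)
  have hinv : LeftInverse (fderiv 𝕜 w (v y)) (fderiv 𝕜 v y) := fun a => by
    simpa using congr(($hcomp) a)
  exact LinearMap.injective_iff_surjective.mp hinv.injective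

theorem deriv_update_apply_eq_fderiv {𝕜 ι κ : Type*} [NontriviallyNormedField 𝕜] [Fintype ι]
    [DecidableEq ι] [Fintype κ] {v : (ι → 𝕜) → κ → 𝕜} {y : ι → 𝕜}
    (hv : DifferentiableAt 𝕜 v y) (i : κ) (j : ι) :
    deriv (fun t => v (update y j t) i) (y j) = fderiv 𝕜 v y (Pi.single j 1) i := by
  have hv' : HasFDerivAt v (fderiv 𝕜 v y) (update y j (y j)) := by
    rw [update_eq_self]; exact hv.hasFDerivAt
  exact (hasDerivAt_pi.mp (hv'.comp_hasDerivAt _ (hasDerivAt_update y j (y j))) i).deriv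

theorem isLocallyConstant_of_unique_ne_zero {X κ M : Type*} [TopologicalSpace X]
    [TopologicalSpace M] [T1Space M] [Zero M] {a : κ → X → M} (ha : ∀ j, Continuous (a j))
    {σ : X → κ} (hzero : ∀ x j, j ≠ σ x → a j x = 0) (hne : ∀ x, a (σ x) x ≠ 0) :
    IsLocallyConstant σ := by
  refine (IsLocallyConstant.iff_eventually_eq σ).mpr fun x => ?_
  filter_upwards [(ha (σ x)).continuousAt.eventually_ne (hne x)] with x' hx'
  by_contra h
  exact hx' (hzero x' (σ x) (Ne.symm h))

theorem stmt8_general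
    {n : ℕ}
    (v w : (Fin n → ℝ) → (Fin n → ℝ))
    (hv : ContDiff ℝ 1 v) (hw : ContDiff ℝ 1 w)
    (hlinv : Function.LeftInverse w v)
    (pd : Fin n → Fin n → (Fin n → ℝ) → ℝ)
    (hpd : ∀ i j y, pd i j y = deriv (fun t => v (Function.update y j t) i) (y j))
    (hrow : ∀ (y : Fin n → ℝ) (i : Fin n), ∃ j : Fin n,
        ∀ j' : Fin n, j' ≠ j → pd i j' y = 0) :
    ∃ π : Equiv.Perm (Fin n),
      ∀ (i j : Fin n), j ≠ π i → ∀ y : Fin n → ℝ, pd i j y = 0 := by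
  have hv' : Differentiable ℝ v := hv.differentiable one_ne_zero
  have hpd' : pd = fun i j y => fderiv ℝ v y (Pi.single j 1) i := by
    ext i j y
    exact (hpd i j y).trans (deriv_update_apply_eq_fderiv (hv' y) i j)
  subst hpd'
  have hsurj : ∀ y, Surjective (fderiv ℝ v y : (Fin n → ℝ) →ₗ[ℝ] Fin n → ℝ) := fun y =>
    fderiv_surjective_of_leftInverse hlinv (hv' y) (hw.differentiable one_ne_zero (v y))
  choose σ hσ using hrow
  have hcont : ∀ i j, Continuous fun y => fderiv ℝ v y (Pi.single j 1) i := fun i j =>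
    (continuous_apply i).comp ((hv.continuous_fderiv one_ne_zero).clm_apply continuous_const)
  have hconst : ∀ y i, σ y i = σ 0 i := fun y i =>
    (isLocallyConstant_of_unique_ne_zero (hcont i) (fun y => hσ y i)
      (fun y => LinearMap.apply_single_ne_zero_of_row_support (hsurj y) (hσ y i))
      ).apply_eq_of_preconnectedSpace y 0
  have hinj : Injective (σ 0) := LinearMap.injective_of_row_support (hsurj 0) (hσ 0)
  refine ⟨Equiv.ofBijective (σ 0) hinj.bijective_of_finite, fun i j hj y => hσ y i j ?_⟩
  rwa [hconst]

/-- If `v : ℝⁿ → ℝⁿ` is a C¹ diffeomorphism whose Jacobian has at most one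
nonzero entry per row at every point, then (since ℝⁿ is connected) the
positions of the nonzero entries are globally constant: there is a single
permutation `π` with `∂vᵢ/∂yⱼ ≡ 0` whenever `j ≠ π(i)`. -/
theorem stmt8
    {n : ℕ}
    (v w : (Fin n → ℝ) → (Fin n → ℝ))
    (hv : ContDiff ℝ 1 v) (hw : ContDiff ℝ 1 w)
    (hlinv : Function.LeftInverse w v) (hrinv : Function.RightInverse w v)
    (pd : Fin n → Fin n → (Fin n → ℝ) → ℝ)
    (hpd : ∀ i j y, pd i j y = deriv (fun t => v (Function.update y j t) i) (y j))
    (hrow : ∀ (y : Fin n → ℝ) (i : Fin n), ∃ j : Fin n,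
        ∀ j' : Fin n, j' ≠ j → pd i j' y = 0) :
    ∃ π : Equiv.Perm (Fin n),
      ∀ (i j : Fin n), j ≠ π i → ∀ y : Fin n → ℝ, pd i j y = 0 :=
  stmt8_general v w hv hw hlinv pd hpd hrow
end

section
/- Suppose each independent component sᵢ is conditionally exponential of order k = 1 given u, i.e., qᵢ(sᵢ,u) = log Qᵢ(sᵢ) + \tilde{q}ᵢ(sᵢ)λᵢ(u) − log Zᵢ(u). Then for any fixed s ∈ ℝⁿ, the vectors w(s,u) ∈ ℝ^{2n} defined by w(s,u) = (∂q₁/∂s₁,…,∂qₙ/∂sₙ, ∂²q₁/∂s₁²,…,∂²qₙ/∂sₙ²) lie, as u varies, in an affine subspace of dimension at most n; in particular one cannot find 2n+1 values u₀,…,u_{2n} such that the 2n differences w(s,uⱼ) − w(s,u₀) are linearly independent. -/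
/-!
Since `λᵢ(u)` enters `qᵢ` linearly and `log Zᵢ(u)` does not depend on `sᵢ`, the `i`-th pair
`(∂qᵢ/∂sᵢ, ∂²qᵢ/∂sᵢ²)` equals `((log Qᵢ)', (log Qᵢ)'') + λᵢ(u) (q̃ᵢ', q̃ᵢ'')` at `sᵢ`. Hence
`w(s, u) = c + ∑ᵢ λᵢ(u) bᵢ` for `n` fixed vectors `bᵢ`, all differences `w(s, u) − w(s, u')`
lie in the span of the `bᵢ`, and that span has dimension at most `n < 2n`.
-/

open Submodule Set

section LinearAlgebra

variable {K M : Type*} [DivisionRing K] [AddCommGroup M] [Module K M]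

theorem LinearIndependent.card_le_card_of_forall_mem_span {ι κ : Type*} [Fintype ι] [Fintype κ]
    {v : ι → M} {b : κ → M} (hv : LinearIndependent K v) (hvb : ∀ j, v j ∈ span K (range b)) :
    Fintype.card ι ≤ Fintype.card κ :=
  calc Fintype.card ι = Module.finrank K (span K (range v)) := (finrank_span_eq_card hv).symm
    _ ≤ Module.finrank K (span K (range b)) :=
      have := FiniteDimensional.span_of_finite K (finite_range b)
      Submodule.finrank_mono (span_le.mpr (range_subset_iff.mpr hvb))
    _ ≤ Fintype.card κ := finrank_range_le_card b

theorem sub_mem_span_of_forall_eq_add_sum {U κ : Type*} [Fintype κ] {f : U → M} {c : M}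
    {a : κ → U → K} {b : κ → M} (hf : ∀ u, f u = c + ∑ i, a i u • b i) (u u' : U) :
    f u - f u' ∈ span K (range b) := by
  have hsum : ∀ u, ∑ i, a i u • b i ∈ span K (range b) := fun u =>
    sum_mem fun i _ => smul_mem _ _ (subset_span (mem_range_self i))
  simpa only [hf, add_sub_add_left_eq_sub] using sub_mem (hsum u) (hsum u')

theorem not_linearIndependent_sub_of_forall_eq_add_sum {U ι κ : Type*} [Fintype ι] [Fintype κ]
    {f : U → M} {c : M} {a : κ → U → K} {b : κ → M} (hf : ∀ u, f u = c + ∑ i, a i u • b i)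
    (hcard : Fintype.card κ < Fintype.card ι) (us : ι → U) (u₀ : U) :
    ¬ LinearIndependent K fun j => f (us j) - f u₀ := fun hv =>
  (hv.card_le_card_of_forall_mem_span fun _ => sub_mem_span_of_forall_eq_add_sum hf _ _).not_gt
    hcard

end LinearAlgebra

theorem Pi.eq_add_sum_smul_single {ι R M : Type*} [Fintype ι] [DecidableEq ι] [Semiring R]
    [AddCommMonoid M] [Module R M] {x c d : ι → M} {a : ι → R} (h : ∀ i, x i = c i + a i • d i) :
    x = c + ∑ i, a i • Pi.single i (d i) := by
  simp only [← Pi.single_smul, Finset.univ_sum_single]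
  exact funext h

theorem deriv_add_mul_const {𝕜 : Type*} [NontriviallyNormedField 𝕜] {f g : 𝕜 → 𝕜}
    (hf : Differentiable 𝕜 f) (hg : Differentiable 𝕜 g) (a : 𝕜) :
    deriv (fun t => f t + g t * a) = fun t => deriv f t + deriv g t * a := by
  funext t
  rw [deriv_fun_add (hf t) ((hg t).mul_const a), deriv_mul_const (hg t)]

/-- For conditionally exponential components of order `k = 1`, i.e.
`qᵢ(s,u) = log Qᵢ(s) + q̃ᵢ(s)λᵢ(u) − log Zᵢ(u)`, the vectors
`w(s,u) = (∂qᵢ/∂sᵢ, ∂²qᵢ/∂sᵢ²)ᵢ ∈ ℝ^{2n}` lie (as `u` varies, `s` fixed)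
in an affine subspace of dimension at most `n` (an affine combination of `n`
fixed vectors with coefficients `λᵢ(u)`); in particular there are no
`2n+1` points `u₀,…,u_{2n}` making the `2n` differences
`w(s,uⱼ) − w(s,u₀)` linearly independent: the Assumption of Variability
cannot hold. -/
theorem stmt9
    {n m : ℕ} (hn : 0 < n)
    (L tq : Fin n → ℝ → ℝ)            -- `L i = log Q i`, `tq i = q̃ᵢ`
    (lam logZ : Fin n → (Fin m → ℝ) → ℝ)
    (hL : ∀ i, ContDiff ℝ 2 (L i)) (htq : ∀ i, ContDiff ℝ 2 (tq i))
    (q : Fin n → ℝ → (Fin m → ℝ) → ℝ)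
    (hq : ∀ i s u, q i s u = L i s + tq i s * lam i u - logZ i u)
    (w : (Fin n → ℝ) → (Fin m → ℝ) → (Fin n → ℝ × ℝ))
    (hw : ∀ s u i, w s u i =
      (deriv (fun t => q i t u) (s i),
       deriv (deriv (fun t => q i t u)) (s i)))
    (s : Fin n → ℝ) :
    (∃ (c : Fin n → ℝ × ℝ) (b : Fin n → (Fin n → ℝ × ℝ)),
        ∀ u : Fin m → ℝ, w s u = c + ∑ i, lam i u • b i) ∧
    ¬ ∃ us : Fin (2 * n + 1) → (Fin m → ℝ),
        LinearIndependent ℝ (fun j : Fin (2 * n) => w s (us j.succ) - w s (us 0)) := by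
  have hderiv : ∀ i u, deriv (fun t => q i t u) =
      fun t => deriv (L i) t + deriv (tq i) t * lam i u := fun i u => by
    simp only [hq, deriv_sub_const_fun]
    exact deriv_add_mul_const ((hL i).differentiable two_ne_zero)
      ((htq i).differentiable two_ne_zero) _
  have hderiv2 : ∀ i u, deriv (deriv (fun t => q i t u)) =
      fun t => deriv (deriv (L i)) t + deriv (deriv (tq i)) t * lam i u := fun i u => by
    rw [hderiv]
    exact deriv_add_mul_const (hL i).differentiable_deriv_two (htq i).differentiable_deriv_two _
  have hw_affine : ∀ u, w s u =
      (fun i => (deriv (L i) (s i), deriv (deriv (L i)) (s i))) +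
        ∑ i, lam i u • Pi.single i (deriv (tq i) (s i), deriv (deriv (tq i)) (s i)) :=
    fun u => Pi.eq_add_sum_smul_single fun i => by
      rw [hw, hderiv2, hderiv]
      simp only [Prod.smul_mk, Prod.mk_add_mk, smul_eq_mul, mul_comm]
  refine ⟨⟨_, _, hw_affine⟩, fun ⟨us, hus⟩ => ?_⟩
  refine not_linearIndependent_sub_of_forall_eq_add_sum hw_affine ?_ (us ∘ Fin.succ) (us 0) hus
  simp only [Fintype.card_fin]
  omega
end
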